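/- Let A and B be two m×n real matrices, k = min(m,n). Let λ_1 ≥ … ≥ λ_k and τ_1 ≥ … ≥ τ_k be the singular values of A and B respectively (in decreasing order with multiplicity), and let δ_1, …, δ_k be the singular values of A − B. Then max_{1≤i≤k} |λ_i − τ_i| ≤ max_{1≤i≤k} |δ_i| = ‖A − B‖, the spectral norm of A − B. -/

import Mathlib

/-- The spectral norm (ℓ2 → ℓ2 operator norm) of a real matrix. -/
noncomputable def specNorm {m n : ℕ} (M : Matrix (Fin m) (Fin n) ℝ) : ℝ :=
  ‖(Matrix.toEuclideanLin M).toContinuousLinearMap‖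

/-!
Write `T = ∑ᵢ sᵢ ⟪vᵢ, ·⟫ uᵢ` and `T' = ∑ᵢ tᵢ ⟪v'ᵢ, ·⟫ u'ᵢ` with decreasing nonnegative singular
values. By a dimension count there is a nonzero `x` in `span {v₀, …, vᵢ}` orthogonal to
`v'₀, …, v'ᵢ₋₁`, and for it `sᵢ ‖x‖ ≤ ‖T x‖ ≤ ‖T' x‖ + ‖T - T'‖ ‖x‖ ≤ (tᵢ + ‖T - T'‖) ‖x‖`.
Exchanging `T` and `T'` bounds `|sᵢ - tᵢ|`, and `‖T - T'‖` is the largest singular value of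
`T - T'` because `|sᵢ|` is attained at `vᵢ` and bounds `‖T x‖ / ‖x‖` by Bessel's inequality.
-/

open scoped RealInnerProductSpace
open Module Submodule

variable {ι E F : Type*} [NormedAddCommGroup E] [InnerProductSpace ℝ E]
  [NormedAddCommGroup F] [InnerProductSpace ℝ F]

theorem Orthonormal.sum_inner_sq_le {v : ι → E} (hv : Orthonormal ℝ v) (s : Finset ι) (x : E) :
    ∑ i ∈ s, ⟪v i, x⟫ ^ 2 ≤ ‖x‖ ^ 2 := by
  simpa only [Real.norm_eq_abs, sq_abs] using hv.sum_inner_products_le x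

theorem Orthonormal.sum_inner_sq_eq_of_mem_span [Fintype ι] {v : ι → E} (hv : Orthonormal ℝ v)
    {x : E} (hx : x ∈ span ℝ (Set.range v)) : ∑ i, ⟪v i, x⟫ ^ 2 = ‖x‖ ^ 2 := by
  obtain ⟨c, rfl⟩ := (mem_span_range_iff_exists_fun ℝ).mp hx
  rw [← real_inner_self_eq_norm_sq, hv.inner_sum]
  simp [hv.inner_right_fintype, sq]

theorem Submodule.exists_mem_ne_zero_forall_inner_eq_zero {κ : Type*} [Fintype κ]
    (U : Submodule ℝ E) (g : κ → E) (hU : Fintype.card κ < finrank ℝ U) :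
    ∃ x ∈ U, x ≠ 0 ∧ ∀ j, ⟪g j, x⟫ = 0 := by
  have : FiniteDimensional ℝ U := Module.finite_of_finrank_pos (by omega)
  let f : U →ₗ[ℝ] κ → ℝ := LinearMap.pi fun j => (innerₛₗ ℝ (g j)).comp U.subtype
  have hf : LinearMap.ker f ≠ ⊥ :=
    LinearMap.ker_ne_bot_of_finrank_lt (by rwa [Module.finrank_fintype_fun_eq_card])
  obtain ⟨x, hx, hx0⟩ := exists_mem_ne_zero_of_ne_bot hf
  exact ⟨x, x.2, by simpa using hx0, fun j => congrFun hx j⟩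

/-- `span (range v)` has dimension `card ι`, one more than the number of constraints. -/
theorem Orthonormal.exists_mem_span_ne_zero_inner_eq_zero [Fintype ι] [LinearOrder ι]
    {v : ι → E} (hv : Orthonormal ℝ v) (v' : ι → E) (i : ι) :
    ∃ x ∈ span ℝ (Set.range v), x ≠ 0 ∧ (∀ j, i < j → ⟪v j, x⟫ = 0) ∧ ∀ j < i, ⟪v' j, x⟫ = 0 := by
  let g : {j // j ≠ i} → E := fun j => if i < j.1 then v j else v' j
  have hcard : Fintype.card {j // j ≠ i} < finrank ℝ (span ℝ (Set.range v)) := by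
    rw [finrank_span_eq_card hv.linearIndependent]
    exact Fintype.card_subtype_lt (not_not.mpr rfl)
  obtain ⟨x, hx, hx0, hg⟩ := exists_mem_ne_zero_forall_inner_eq_zero _ g hcard
  refine ⟨x, hx, hx0, fun j hj => ?_, fun j hj => ?_⟩
  · simpa [g, hj] using hg ⟨j, hj.ne'⟩
  · simpa [g, hj.not_gt] using hg ⟨j, hj.ne⟩

/-- A singular value decomposition `T = ∑ᵢ sᵢ ⟪vᵢ, ·⟫ uᵢ`; the `sᵢ` need be neither sorted nor
nonnegative. -/
structure IsSingularSystem [Fintype ι] (T : E →L[ℝ] F) (s : ι → ℝ) (u : ι → F) (v : ι → E) :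
    Prop where
  orthonormal_left : Orthonormal ℝ u
  orthonormal_right : Orthonormal ℝ v
  apply_eq : ∀ x, T x = ∑ i, (s i * ⟪v i, x⟫) • u i

namespace IsSingularSystem

variable [Fintype ι] {T T' : E →L[ℝ] F} {s t : ι → ℝ} {u u' : ι → F} {v v' : ι → E}

theorem norm_apply_sq (h : IsSingularSystem T s u v) (x : E) :
    ‖T x‖ ^ 2 = ∑ i, (s i * ⟪v i, x⟫) ^ 2 := by
  rw [h.apply_eq, ← real_inner_self_eq_norm_sq, h.orthonormal_left.inner_sum]
  simp [sq]

theorem apply_right (h : IsSingularSystem T s u v) (i : ι) : T (v i) = s i • u i := by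
  classical
  simp [h.apply_eq, orthonormal_iff_ite.mp h.orthonormal_right]

theorem norm_apply_le (h : IsSingularSystem T s u v) {x : E} {C : ℝ} (hC : 0 ≤ C)
    (hs : ∀ i, ⟪v i, x⟫ ≠ 0 → |s i| ≤ C) : ‖T x‖ ≤ C * ‖x‖ := by
  refine le_of_sq_le_sq ?_ (by positivity)
  calc ‖T x‖ ^ 2 = ∑ i, (s i * ⟪v i, x⟫) ^ 2 := h.norm_apply_sq x
    _ ≤ ∑ i, C ^ 2 * ⟪v i, x⟫ ^ 2 := by
      gcongr with i
      by_cases hi : ⟪v i, x⟫ = 0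
      · simp [hi]
      · rw [mul_pow, ← sq_abs (s i)]
        gcongr
        exact hs i hi
    _ ≤ C ^ 2 * ‖x‖ ^ 2 := by
      rw [← Finset.mul_sum]
      gcongr
      exact h.orthonormal_right.sum_inner_sq_le _ x
    _ = (C * ‖x‖) ^ 2 := by ring

theorem mul_norm_le_norm_apply (h : IsSingularSystem T s u v) {x : E}
    (hx : x ∈ span ℝ (Set.range v)) {c : ℝ} (hc : 0 ≤ c) (hs : ∀ i, ⟪v i, x⟫ ≠ 0 → c ≤ |s i|) :
    c * ‖x‖ ≤ ‖T x‖ := by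
  refine le_of_sq_le_sq ?_ (norm_nonneg _)
  calc (c * ‖x‖) ^ 2 = ∑ i, c ^ 2 * ⟪v i, x⟫ ^ 2 := by
        rw [mul_pow, ← Finset.mul_sum, h.orthonormal_right.sum_inner_sq_eq_of_mem_span hx]
    _ ≤ ∑ i, (s i * ⟪v i, x⟫) ^ 2 := by
      gcongr with i
      by_cases hi : ⟪v i, x⟫ = 0
      · simp [hi]
      · rw [mul_pow, ← sq_abs (s i)]
        gcongr
        exact hs i hi
    _ = ‖T x‖ ^ 2 := (h.norm_apply_sq x).symm

theorem abs_le_opNorm (h : IsSingularSystem T s u v) (i : ι) : |s i| ≤ ‖T‖ := by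
  simpa [h.apply_right, norm_smul, h.orthonormal_left.1 i, h.orthonormal_right.1 i] using
    T.le_opNorm (v i)

theorem opNorm_eq_sup' (h : IsSingularSystem T s u v) (hι : (Finset.univ : Finset ι).Nonempty) :
    ‖T‖ = Finset.univ.sup' hι fun i => |s i| := by
  have hle : ∀ i, |s i| ≤ Finset.univ.sup' hι fun i => |s i| :=
    fun i => Finset.le_sup' (fun i => |s i|) (Finset.mem_univ i)
  refine le_antisymm ?_ (Finset.sup'_le _ _ fun i _ => h.abs_le_opNorm i)
  obtain ⟨i₀, -⟩ := id hι
  have hC := (abs_nonneg _).trans (hle i₀)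
  exact T.opNorm_le_bound hC fun x => h.norm_apply_le hC fun i _ => hle i

variable [LinearOrder ι]

theorem sub_le_opNorm_sub (hT : IsSingularSystem T s u v) (hT' : IsSingularSystem T' t u' v')
    (hs : Antitone s) (ht : Antitone t) (i : ι) (hsi : 0 ≤ s i) (ht0 : ∀ j, 0 ≤ t j) :
    s i - t i ≤ ‖T - T'‖ := by
  obtain ⟨x, hx, hx0, hxv, hxv'⟩ := hT.orthonormal_right.exists_mem_span_ne_zero_inner_eq_zero v' i
  have hlow : s i * ‖x‖ ≤ ‖T x‖ := hT.mul_norm_le_norm_apply hx hsi fun j hj =>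
    (hs (not_lt.mp fun hij => hj (hxv j hij))).trans (le_abs_self _)
  have hup : ‖T' x‖ ≤ t i * ‖x‖ := hT'.norm_apply_le (ht0 i) fun j hj => by
    rw [abs_of_nonneg (ht0 j)]
    exact ht (not_lt.mp fun hji => hj (hxv' j hji))
  have key : s i * ‖x‖ ≤ (t i + ‖T - T'‖) * ‖x‖ :=
    calc s i * ‖x‖ ≤ ‖T x‖ := hlow
      _ = ‖T' x + (T - T') x‖ := by simp
      _ ≤ ‖T' x‖ + ‖T - T'‖ * ‖x‖ := (norm_add_le _ _).trans (by gcongr; exact (T - T').le_opNorm x)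
      _ ≤ (t i + ‖T - T'‖) * ‖x‖ := by rw [add_mul]; gcongr
  linarith [le_of_mul_le_mul_right key (norm_pos_iff.mpr hx0)]

theorem abs_sub_le_opNorm_sub (hT : IsSingularSystem T s u v) (hT' : IsSingularSystem T' t u' v')
    (hs : Antitone s) (ht : Antitone t) (hs0 : ∀ j, 0 ≤ s j) (ht0 : ∀ j, 0 ≤ t j) (i : ι) :
    |s i - t i| ≤ ‖T - T'‖ := by
  refine abs_sub_le_iff.mpr ⟨hT.sub_le_opNorm_sub hT' hs ht i (hs0 i) ht0, ?_⟩
  rw [norm_sub_rev]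
  exact hT'.sub_le_opNorm_sub hT ht hs i (ht0 i) hs0

end IsSingularSystem

theorem orthonormal_toLp_of_sum_mul_eq_ite {n : Type*} [Fintype n] [DecidableEq ι]
    {x : ι → n → ℝ} (hx : ∀ i i', ∑ a, x i a * x i' a = if i = i' then (1 : ℝ) else 0) :
    Orthonormal ℝ fun i => WithLp.toLp 2 (x i) := by
  rw [orthonormal_iff_ite]
  intro i j
  simpa [PiLp.inner_apply, mul_comm] using hx i j

theorem Matrix.isSingularSystem_toEuclideanLin {m n : Type*} [Fintype m] [Fintype n]
    [DecidableEq n] [Fintype ι] [DecidableEq ι] {M : Matrix m n ℝ} {s : ι → ℝ}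
    {x : ι → m → ℝ} {y : ι → n → ℝ}
    (hx : ∀ i i', ∑ a, x i a * x i' a = if i = i' then (1 : ℝ) else 0)
    (hy : ∀ i i', ∑ b, y i b * y i' b = if i = i' then (1 : ℝ) else 0)
    (hM : ∀ a b, M a b = ∑ i, s i * x i a * y i b) :
    IsSingularSystem (toEuclideanLin M).toContinuousLinearMap s
      (fun i => WithLp.toLp 2 (x i)) (fun i => WithLp.toLp 2 (y i)) where
  orthonormal_left := orthonormal_toLp_of_sum_mul_eq_ite hx
  orthonormal_right := orthonormal_toLp_of_sum_mul_eq_ite hy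
  apply_eq w := by
    ext a
    simp only [LinearMap.coe_toContinuousLinearMap', toLpLin_apply, mulVec, dotProduct, hM,
      PiLp.inner_apply, RCLike.inner_apply, Real.ringHom_apply, WithLp.ofLp_sum, WithLp.ofLp_smul,
      Finset.sum_apply, Pi.smul_apply, smul_eq_mul, Finset.sum_mul, Finset.mul_sum]
    rw [Finset.sum_comm]
    exact Finset.sum_congr rfl fun i _ => Finset.sum_congr rfl fun b _ => by ring

theorem weyl_singular_value_perturbation_general
    (m n : ℕ) (A B : Matrix (Fin m) (Fin n) ℝ)
    (k : ℕ) (hk0 : 0 < k)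
    (lam τ δ : Fin k → ℝ)
    (xA : Fin k → Fin m → ℝ) (yA : Fin k → Fin n → ℝ)
    (xB : Fin k → Fin m → ℝ) (yB : Fin k → Fin n → ℝ)
    (xD : Fin k → Fin m → ℝ) (yD : Fin k → Fin n → ℝ)
    (hlam0 : ∀ i, 0 ≤ lam i) (hτ0 : ∀ i, 0 ≤ τ i)
    (hlam_mono : ∀ i j : Fin k, i ≤ j → lam j ≤ lam i)
    (hτ_mono : ∀ i j : Fin k, i ≤ j → τ j ≤ τ i)
    (hxA : ∀ i i', ∑ a, xA i a * xA i' a = if i = i' then (1:ℝ) else 0)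
    (hyA : ∀ i i', ∑ b, yA i b * yA i' b = if i = i' then (1:ℝ) else 0)
    (hxB : ∀ i i', ∑ a, xB i a * xB i' a = if i = i' then (1:ℝ) else 0)
    (hyB : ∀ i i', ∑ b, yB i b * yB i' b = if i = i' then (1:ℝ) else 0)
    (hxD : ∀ i i', ∑ a, xD i a * xD i' a = if i = i' then (1:ℝ) else 0)
    (hyD : ∀ i i', ∑ b, yD i b * yD i' b = if i = i' then (1:ℝ) else 0)
    (hA : ∀ a b, A a b = ∑ i, lam i * xA i a * yA i b)
    (hB : ∀ a b, B a b = ∑ i, τ i * xB i a * yB i b)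
    (hD : ∀ a b, A a b - B a b = ∑ i, δ i * xD i a * yD i b) :
    (∀ i : Fin k, |lam i - τ i| ≤
        Finset.univ.sup' (Finset.univ_nonempty_iff.mpr ⟨⟨0, hk0⟩⟩) fun i' => |δ i'|) ∧
    (Finset.univ.sup' (Finset.univ_nonempty_iff.mpr ⟨⟨0, hk0⟩⟩) fun i' => |δ i'|)
      = specNorm (A - B) := by
  have hSA := Matrix.isSingularSystem_toEuclideanLin hxA hyA hA
  have hSB := Matrix.isSingularSystem_toEuclideanLin hxB hyB hB
  have hSD := Matrix.isSingularSystem_toEuclideanLin (M := A - B) hxD hyD hD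
  have hnorm : (Finset.univ.sup' (Finset.univ_nonempty_iff.mpr ⟨⟨0, hk0⟩⟩) fun i' => |δ i'|)
      = specNorm (A - B) := (hSD.opNorm_eq_sup' _).symm
  refine ⟨fun i => ?_, hnorm⟩
  rw [hnorm, specNorm, map_sub, map_sub]
  exact hSA.abs_sub_le_opNorm_sub hSB hlam_mono hτ_mono hlam0 hτ0 i

/-- **Weyl's inequality for singular values.**
Let `A, B` be `m × n` real matrices, `k = min m n`, with singular values
`λ_1 ≥ … ≥ λ_k` of `A` and `τ_1 ≥ … ≥ τ_k` of `B` (each given through a full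
singular value decomposition with orthonormal factors), and let `δ_1, …, δ_k`
be the singular values of `A − B` (in any order).  Then
`max_i |λ_i − τ_i| ≤ max_i |δ_i| = ‖A − B‖`. -/
theorem weyl_singular_value_perturbation
    (m n : ℕ) (A B : Matrix (Fin m) (Fin n) ℝ)
    (k : ℕ) (hk : k = min m n) (hk0 : 0 < k)
    (lam τ δ : Fin k → ℝ)
    (xA : Fin k → Fin m → ℝ) (yA : Fin k → Fin n → ℝ)
    (xB : Fin k → Fin m → ℝ) (yB : Fin k → Fin n → ℝ)
    (xD : Fin k → Fin m → ℝ) (yD : Fin k → Fin n → ℝ)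
    (hlam0 : ∀ i, 0 ≤ lam i) (hτ0 : ∀ i, 0 ≤ τ i) (hδ0 : ∀ i, 0 ≤ δ i)
    (hlam_mono : ∀ i j : Fin k, i ≤ j → lam j ≤ lam i)
    (hτ_mono : ∀ i j : Fin k, i ≤ j → τ j ≤ τ i)
    (hxA : ∀ i i', ∑ a, xA i a * xA i' a = if i = i' then (1:ℝ) else 0)
    (hyA : ∀ i i', ∑ b, yA i b * yA i' b = if i = i' then (1:ℝ) else 0)
    (hxB : ∀ i i', ∑ a, xB i a * xB i' a = if i = i' then (1:ℝ) else 0)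
    (hyB : ∀ i i', ∑ b, yB i b * yB i' b = if i = i' then (1:ℝ) else 0)
    (hxD : ∀ i i', ∑ a, xD i a * xD i' a = if i = i' then (1:ℝ) else 0)
    (hyD : ∀ i i', ∑ b, yD i b * yD i' b = if i = i' then (1:ℝ) else 0)
    (hA : ∀ a b, A a b = ∑ i, lam i * xA i a * yA i b)
    (hB : ∀ a b, B a b = ∑ i, τ i * xB i a * yB i b)
    (hD : ∀ a b, A a b - B a b = ∑ i, δ i * xD i a * yD i b) :
    (∀ i : Fin k, |lam i - τ i| ≤
        Finset.univ.sup' (Finset.univ_nonempty_iff.mpr ⟨⟨0, hk0⟩⟩) fun i' => |δ i'|) ∧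
    (Finset.univ.sup' (Finset.univ_nonempty_iff.mpr ⟨⟨0, hk0⟩⟩) fun i' => |δ i'|)
      = specNorm (A - B) :=
  weyl_singular_value_perturbation_general m n A B k hk0 lam τ δ xA yA xB yB xD yD hlam0 hτ0
    hlam_mono hτ_mono hxA hyA hxB hyB hxD hyD hA hB hD
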